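/- arXiv:2603.15817 — 4 statements merged into one kernel-verified Lean document; each statement's English description precedes it below -/
import Mathlib

section
/- Let t ↦ P_{t,s} and t ↦ P_{t,g} be regular (QMD) submodels through P₀ with scores s and g respectively. Then limsup_{t→0} H(P_{t,s}, P_{t,g}) / |t| ≤ (1/(2√2)) ‖s − g‖_{L₂(P₀)}. -/
/-! Write `rₜ = (√pₜ - √p₀) / t - ½ s √p₀` for the QMD remainder of a submodel with score `s`.
The difference quotient splits as `(√p_{t,s} - √p_{t,g}) / t = r_{t,s} - r_{t,g} + ½ (s - g) √p₀`,
and `‖(s - g) √p₀‖_{L²(ν)} = ‖s - g‖_{L²(P₀)}`. Minkowski's inequality in `L²(ν)` therefore bounds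
`H(P_{t,s}, P_{t,g}) / |t|` by `(‖r_{t,s}‖ + ‖r_{t,g}‖) / √2 + ‖s - g‖_{L²(P₀)} / (2√2)`, and both
remainders tend to `0` in `L²(ν)` by quadratic mean differentiability. -/

open MeasureTheory Filter Topology Set ENNReal

namespace Semiparam

variable {Z : Type*} [MeasurableSpace Z]

/-- `p` is a density of `P` with respect to `ν`. -/
def IsDensityOf (ν P : Measure Z) (p : Z → ℝ) : Prop :=
  P = ν.withDensity (fun z => ENNReal.ofReal (p z))

/-- A regular (QMD) parametric submodel through `P0` (which has density `p0` w.r.t. `ν`)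
inside the model `model`, with score `s`. -/
structure QMDSubmodel (ν : Measure Z) (model : Set (Measure Z)) (P0 : Measure Z)
    (p0 : Z → ℝ) (s : Z → ℝ) where
  ε : ℝ
  εpos : 0 < ε
  P : ℝ → Measure Z
  p : ℝ → Z → ℝ
  mem : ∀ t ∈ Set.Ioo (-ε) ε, P t ∈ model
  prob : ∀ t ∈ Set.Ioo (-ε) ε, IsProbabilityMeasure (P t)
  zero : P 0 = P0
  p_zero : p 0 = p0
  p_meas : ∀ t ∈ Set.Ioo (-ε) ε, Measurable (p t)
  density : ∀ t ∈ Set.Ioo (-ε) ε, IsDensityOf ν (P t) (p t)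
  score_memLp : MemLp s 2 P0
  score_mean_zero : ∫ z, s z ∂P0 = 0
  qmd : Tendsto (fun t => ∫ z, ((Real.sqrt (p t z) - Real.sqrt (p0 z)) / t
      - (1/2) * s z * Real.sqrt (p0 z)) ^ 2 ∂ν) (𝓝[≠] (0:ℝ)) (𝓝 0)

/-- The Hellinger distance between two densities. -/
noncomputable def hellingerDist (ν : Measure Z) (p q : Z → ℝ) : ℝ :=
  (1 / Real.sqrt 2) * Real.sqrt (∫ z, (Real.sqrt (p z) - Real.sqrt (q z)) ^ 2 ∂ν)

end Semiparam

section L2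

variable {α : Type*} [MeasurableSpace α] {μ : Measure α} {f g : α → ℝ}

lemma sqrt_integral_sq_eq_toReal_eLpNorm (hf : MemLp f 2 μ) :
    √(∫ x, f x ^ 2 ∂μ) = (eLpNorm f 2 μ).toReal := by
  rw [hf.eLpNorm_eq_integral_rpow_norm two_ne_zero ofNat_ne_top,
    toReal_ofReal (by positivity), Real.sqrt_eq_rpow]
  norm_num

lemma sqrt_integral_sq_add_le (hf : MemLp f 2 μ) (hg : MemLp g 2 μ) :
    √(∫ x, (f x + g x) ^ 2 ∂μ) ≤ √(∫ x, f x ^ 2 ∂μ) + √(∫ x, g x ^ 2 ∂μ) := by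
  rw [sqrt_integral_sq_eq_toReal_eLpNorm (f := fun x => f x + g x) (hf.add hg),
    sqrt_integral_sq_eq_toReal_eLpNorm hf, sqrt_integral_sq_eq_toReal_eLpNorm hg,
    ← toReal_add hf.2.ne hg.2.ne]
  exact toReal_mono (add_ne_top.2 ⟨hf.2.ne, hg.2.ne⟩)
    (eLpNorm_add_le hf.1 hg.1 one_le_two)

lemma sqrt_integral_sq_sub_le (hf : MemLp f 2 μ) (hg : MemLp g 2 μ) :
    √(∫ x, (f x - g x) ^ 2 ∂μ) ≤ √(∫ x, f x ^ 2 ∂μ) + √(∫ x, g x ^ 2 ∂μ) := by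
  simpa [sub_eq_add_neg] using sqrt_integral_sq_add_le hf hg.neg

lemma sqrt_integral_const_mul_sq (c : ℝ) (f : α → ℝ) :
    √(∫ x, (c * f x) ^ 2 ∂μ) = |c| * √(∫ x, f x ^ 2 ∂μ) := by
  simp_rw [mul_pow, integral_const_mul, Real.sqrt_mul (sq_nonneg c), Real.sqrt_sq_eq_abs]

end L2

section WithDensity

variable {α : Type*} [MeasurableSpace α] {ν : Measure α} {p f : α → ℝ}

lemma sq_mul_sqrt_eq_toNNReal_smul (a x : ℝ) : (a * √x) ^ 2 = x.toNNReal • a ^ 2 := by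
  rw [mul_pow, Real.sq_sqrt', NNReal.smul_def, Real.coe_toNNReal', smul_eq_mul, mul_comm]

lemma integral_sq_withDensity_ofReal (hp : Measurable p) (f : α → ℝ) :
    ∫ x, f x ^ 2 ∂ν.withDensity (fun x => ENNReal.ofReal (p x)) = ∫ x, (f x * √(p x)) ^ 2 ∂ν := by
  simp_rw [sq_mul_sqrt_eq_toNNReal_smul]
  exact integral_withDensity_eq_integral_smul hp.real_toNNReal _

lemma MeasureTheory.MemLp.mul_sqrt_of_withDensity (hp : Measurable p)
    (hf : MemLp f 2 (ν.withDensity fun x => ENNReal.ofReal (p x))) :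
    MemLp (fun x => f x * √(p x)) 2 ν := by
  have hmeas : AEStronglyMeasurable (fun x => f x * √(p x)) ν := by
    have h := (aestronglyMeasurable_withDensity_iff hp.real_toNNReal).1 hf.1
    refine (h.mul hp.sqrt.inv.aestronglyMeasurable).congr (ae_of_all _ fun x => ?_)
    simp only [Pi.mul_apply, Pi.inv_apply, Real.coe_toNNReal', smul_eq_mul, ← Real.sq_sqrt']
    rcases eq_or_ne √(p x) 0 with h | h
    · simp [h]
    · field_simp
  rw [memLp_two_iff_integrable_sq hmeas]
  simp_rw [sq_mul_sqrt_eq_toNNReal_smul]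
  exact (integrable_withDensity_iff_integrable_smul hp.real_toNNReal).1
    ((memLp_two_iff_integrable_sq hf.1).1 hf)

lemma memLp_sqrt_of_withDensity (hp : Measurable p)
    [IsFiniteMeasure (ν.withDensity fun x => ENNReal.ofReal (p x))] :
    MemLp (fun x => √(p x)) 2 ν := by
  simpa using (memLp_const (1 : ℝ)).mul_sqrt_of_withDensity hp

end WithDensity

namespace Semiparam

variable {Z : Type*} [MeasurableSpace Z]

namespace QMDSubmodel

variable {ν : Measure Z} {model : Set (Measure Z)} {P0 : Measure Z} {p0 s : Z → ℝ}
  (S : QMDSubmodel ν model P0 p0 s) {t : ℝ}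

noncomputable def remainder (t : ℝ) (z : Z) : ℝ :=
  (√(S.p t z) - √(p0 z)) / t - 1 / 2 * s z * √(p0 z)

lemma tendsto_sqrt_integral_remainder_sq :
    Tendsto (fun t => √(∫ z, S.remainder t z ^ 2 ∂ν)) (𝓝[≠] 0) (𝓝 0) := by
  simpa only [remainder, Real.sqrt_zero] using S.qmd.sqrt

lemma zero_mem_Ioo : (0 : ℝ) ∈ Ioo (-S.ε) S.ε := ⟨neg_lt_zero.2 S.εpos, S.εpos⟩

lemma eventually_mem_Ioo : ∀ᶠ t in 𝓝[≠] (0 : ℝ), t ∈ Ioo (-S.ε) S.ε :=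
  eventually_nhdsWithin_of_eventually_nhds (Ioo_mem_nhds (neg_lt_zero.2 S.εpos) S.εpos)

lemma measurable_p0 (S : QMDSubmodel ν model P0 p0 s) : Measurable p0 :=
  S.p_zero ▸ S.p_meas 0 S.zero_mem_Ioo

lemma P0_eq_withDensity (S : QMDSubmodel ν model P0 p0 s) :
    P0 = ν.withDensity fun z => ENNReal.ofReal (p0 z) := by
  simpa only [IsDensityOf, S.zero, S.p_zero] using S.density 0 S.zero_mem_Ioo

lemma memLp_sqrt_density (ht : t ∈ Ioo (-S.ε) S.ε) : MemLp (fun z => √(S.p t z)) 2 ν := by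
  have : IsFiniteMeasure (ν.withDensity fun z => ENNReal.ofReal (S.p t z)) := by
    have := S.prob t ht
    rw [← S.density t ht]
    infer_instance
  exact memLp_sqrt_of_withDensity (S.p_meas t ht)

lemma memLp_remainder (ht : t ∈ Ioo (-S.ε) S.ε) : MemLp (S.remainder t) 2 ν := by
  have hp0 : MemLp (fun z => √(p0 z)) 2 ν := S.p_zero ▸ S.memLp_sqrt_density S.zero_mem_Ioo
  have hscore : MemLp (fun z => s z * √(p0 z)) 2 ν :=
    (S.P0_eq_withDensity ▸ S.score_memLp).mul_sqrt_of_withDensity S.measurable_p0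
  convert (((S.memLp_sqrt_density ht).sub hp0).const_mul t⁻¹).sub (hscore.const_mul (1 / 2))
    using 1
  ext z
  simp only [remainder, Pi.sub_apply]
  ring

end QMDSubmodel

lemma hellingerDist_div_abs (ν : Measure Z) (p q : Z → ℝ) (t : ℝ) :
    hellingerDist ν p q / |t| = 1 / √2 * √(∫ z, ((√(p z) - √(q z)) / t) ^ 2 ∂ν) := by
  simp_rw [div_eq_inv_mul _ t, sqrt_integral_const_mul_sq, abs_inv, hellingerDist]
  ring

lemma hellingerDist_div_abs_le {ν : Measure Z} {model : Set (Measure Z)} {P0 : Measure Z}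
    {p0 s g : Z → ℝ} (Ss : QMDSubmodel ν model P0 p0 s) (Sg : QMDSubmodel ν model P0 p0 g)
    {t : ℝ} (hts : t ∈ Ioo (-Ss.ε) Ss.ε) (htg : t ∈ Ioo (-Sg.ε) Sg.ε) :
    hellingerDist ν (Ss.p t) (Sg.p t) / |t|
      ≤ 1 / √2 * (√(∫ z, Ss.remainder t z ^ 2 ∂ν) + √(∫ z, Sg.remainder t z ^ 2 ∂ν))
        + 1 / (2 * √2) * √(∫ z, (s z - g z) ^ 2 ∂P0) := by
  set k : Z → ℝ := fun z => 1 / 2 * ((s z - g z) * √(p0 z))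
  have hdiff : ∀ z, (√(Ss.p t z) - √(Sg.p t z)) / t
      = Ss.remainder t z - Sg.remainder t z + k z := fun z => by
    simp only [QMDSubmodel.remainder, k]
    ring
  have hk : MemLp k 2 ν :=
    ((Ss.P0_eq_withDensity ▸ Ss.score_memLp.sub Sg.score_memLp).mul_sqrt_of_withDensity
      Ss.measurable_p0).const_mul _
  have hk_norm : √(∫ z, k z ^ 2 ∂ν) = 1 / 2 * √(∫ z, (s z - g z) ^ 2 ∂P0) := by
    rw [sqrt_integral_const_mul_sq, Ss.P0_eq_withDensity,
      integral_sq_withDensity_ofReal Ss.measurable_p0]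
    norm_num
  have hremainder := (Ss.memLp_remainder hts).sub (Sg.memLp_remainder htg)
  calc hellingerDist ν (Ss.p t) (Sg.p t) / |t|
      = 1 / √2 * √(∫ z, (Ss.remainder t z - Sg.remainder t z + k z) ^ 2 ∂ν) := by
        simp_rw [hellingerDist_div_abs, hdiff]
    _ ≤ 1 / √2 * (√(∫ z, Ss.remainder t z ^ 2 ∂ν) + √(∫ z, Sg.remainder t z ^ 2 ∂ν)
          + √(∫ z, k z ^ 2 ∂ν)) := by
        gcongr
        exact (sqrt_integral_sq_add_le hremainder hk).trans <| add_le_add_left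
          (sqrt_integral_sq_sub_le (Ss.memLp_remainder hts) (Sg.memLp_remainder htg)) _
    _ = _ := by
        rw [hk_norm]
        ring

theorem hellinger_gap_between_regular_submodels_general
    (ν : Measure Z)
    (model : Set (Measure Z))
    (P0 : Measure Z)
    (p0 : Z → ℝ)
    (s g : Z → ℝ)
    (Ss : QMDSubmodel ν model P0 p0 s)
    (Sg : QMDSubmodel ν model P0 p0 g) :
    Filter.limsup (fun t : ℝ => hellingerDist ν (Ss.p t) (Sg.p t) / |t|) (𝓝[≠] (0:ℝ))
      ≤ (1 / (2 * Real.sqrt 2)) * Real.sqrt (∫ z, (s z - g z) ^ 2 ∂P0) := by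
  set C := 1 / (2 * √2) * √(∫ z, (s z - g z) ^ 2 ∂P0)
  set bound : ℝ → ℝ := fun t =>
    1 / √2 * (√(∫ z, Ss.remainder t z ^ 2 ∂ν) + √(∫ z, Sg.remainder t z ^ 2 ∂ν)) + C
  have hle : ∀ᶠ t in 𝓝[≠] 0, hellingerDist ν (Ss.p t) (Sg.p t) / |t| ≤ bound t := by
    filter_upwards [Ss.eventually_mem_Ioo, Sg.eventually_mem_Ioo] with t hts htg
    exact hellingerDist_div_abs_le Ss Sg hts htg
  have hbound : Tendsto bound (𝓝[≠] 0) (𝓝 C) := by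
    simpa only [add_zero, mul_zero, zero_add] using ((Ss.tendsto_sqrt_integral_remainder_sq.add
      Sg.tendsto_sqrt_integral_remainder_sq).const_mul (1 / √2)).add_const C
  have hnonneg : ∀ t, 0 ≤ hellingerDist ν (Ss.p t) (Sg.p t) / |t| := fun t => by
    rw [hellingerDist_div_abs]
    positivity
  calc limsup (fun t => hellingerDist ν (Ss.p t) (Sg.p t) / |t|) (𝓝[≠] 0)
      ≤ limsup bound (𝓝[≠] 0) :=
        limsup_le_limsup hle (isCoboundedUnder_le_of_le _ hnonneg) hbound.isBoundedUnder_le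
    _ = C := hbound.limsup_eq

theorem hellinger_gap_between_regular_submodels
    (ν : Measure Z) [SigmaFinite ν]
    (model : Set (Measure Z))
    (P0 : Measure Z) [IsProbabilityMeasure P0]
    (p0 : Z → ℝ) (hp0_meas : Measurable p0) (hp0_nonneg : ∀ᵐ z ∂ν, 0 ≤ p0 z)
    (hp0 : IsDensityOf ν P0 p0)
    (s g : Z → ℝ)
    (Ss : QMDSubmodel ν model P0 p0 s)
    (Sg : QMDSubmodel ν model P0 p0 g) :
    Filter.limsup (fun t : ℝ => hellingerDist ν (Ss.p t) (Sg.p t) / |t|) (𝓝[≠] (0:ℝ))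
      ≤ (1 / (2 * Real.sqrt 2)) * Real.sqrt (∫ z, (s z - g z) ^ 2 ∂P0) :=
  hellinger_gap_between_regular_submodels_general ν model P0 p0 s g Ss Sg

end Semiparam
end

section
/- Suppose: (i) D := m(·;β₀,η₀) is an influence function of β at P₀ (a gradient), i.e. for every regular submodel with score s, (d/dt)β(P_{t,s})|₀ = E₀[D s]; (ii) the map (β,η) ↦ E₀[m(Z;β,η)] is Fréchet differentiable at (β₀,η₀); (iii) there exists a score s ∈ L₂⁰(P₀) proportional to an influence function φ* with E₀[(φ*)²] > 0, realized by a regular submodel t ↦ P_{t,s} along which the coordinate path is differentiable at 0, and along this submodel (d/dt) E₀[m(Z; β(P_{t,s}), η(P_{t,s}))] |_{t=0} = −(d/dt) β(P_{t,s}) |_{t=0}; (iv, local product structure) for every h ∈ Ḣ there exists a regular submodel through P₀ with (d/dt)β(P_t)|₀ = 0 and (d/dt)η(P_t)|₀ = h, and along each such submodel the Gâteaux derivative identity of (iii) holds; and (v) β ↦ E₀[m(Z;β,η₀)] is differentiable at β₀. Then (d/dβ) E₀[m(Z; β, η₀)] |_{β=β₀} = −1. -/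
/-! The key identity along the submodel with score `c • φ*` says that the derivative `DF` of
`(b, e) ↦ E₀[m(Z; b, e)]` maps the tangent `(β̇, η̇)` to `-β̇`, and `β̇ = c E₀[(φ*)²] ≠ 0`.
Local product structure supplies a submodel with tangent `(0, η̇)`, along which `DF` vanishes.
Linearity of `DF` then gives `β̇ · DF (1, 0) = -β̇`, i.e. the partial derivative in `b` is `-1`. -/

open MeasureTheory Filter Topology Set ENNReal

namespace Semiparam

variable {Z : Type*} [MeasurableSpace Z]

/-- Admissible perturbation directions of the nuisance set `ℋ` at `η0`. -/
def admissibleDirections {V : Type*} [NormedAddCommGroup V] [NormedSpace ℝ V]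
    (ℋ : Set V) (η0 : V) : Set V :=
  {h | ∃ ε > 0, ∀ t : ℝ, |t| < ε → η0 + t • h ∈ ℋ}

section Calculus

variable {𝕜 : Type*} [NontriviallyNormedField 𝕜]
  {E G W : Type*} [NormedAddCommGroup E] [NormedSpace 𝕜 E] [NormedAddCommGroup G]
  [NormedSpace 𝕜 G] [NormedAddCommGroup W] [NormedSpace 𝕜 W]

theorem _root_.ContinuousLinearMap.apply_prod_eq_smul_add (L : 𝕜 × E →L[𝕜] W) (a : 𝕜) (e : E) :
    L (a, e) = a • L (1, 0) + L (0, e) := by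
  rw [← L.map_smul, ← L.map_add]
  simp

theorem _root_.HasFDerivAt.apply_eq_of_hasDerivAt_prodMk {Φ : E × G → W} {DΦ : E × G →L[𝕜] W}
    {f : 𝕜 → E} {g : 𝕜 → G} {a : E} {b : G} {d : W} {x : 𝕜}
    (hΦ : HasFDerivAt Φ DΦ (f x, g x)) (hf : HasDerivAt f a x) (hg : HasDerivAt g b x)
    (hcomp : HasDerivAt (fun t => Φ (f t, g t)) d x) :
    DΦ (a, b) = d :=
  (hΦ.comp_hasDerivAt x (hf.prodMk hg)).unique hcomp

end Calculus

theorem negative_identity_general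
    {V : Type*} [NormedAddCommGroup V] [NormedSpace ℝ V]
    (ν : Measure Z)
    (model : Set (Measure Z))
    (P0 : Measure Z)
    (p0 : Z → ℝ)
    (ℋ : Set V) (β : Measure Z → ℝ) (η : Measure Z → V)
    (m : Z → ℝ → V → ℝ)
    -- (ii) Fréchet differentiability of (β,η) ↦ E₀[m(Z;β,η)] at (β₀,η₀)
    (F : ℝ × V → ℝ) (hF : ∀ (b : ℝ) (e : V), F (b, e) = ∫ z, m z b e ∂P0)
    (DF : ℝ × V →L[ℝ] ℝ) (hDF : HasFDerivAt F DF (β P0, η P0))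
    -- (iii) a score proportional to an influence function φ* with E₀[(φ*)²] > 0,
    -- realized by a regular submodel with differentiable coordinate path along which
    -- the key derivative identity holds
    (φstar : Z → ℝ)
    (hφstar_grad : ∀ (s : Z → ℝ) (S : QMDSubmodel ν model P0 p0 s),
      HasDerivAt (fun t => β (S.P t)) (∫ z, φstar z * s z ∂P0) 0)
    (hφstar_pos : 0 < ∫ z, (φstar z) ^ 2 ∂P0)
    (c : ℝ) (hc : c ≠ 0)
    (Sstar : QMDSubmodel ν model P0 p0 (fun z => c * φstar z))
    (bdot : ℝ) (edot : V)
    (hbdot : HasDerivAt (fun t => β (Sstar.P t)) bdot 0)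
    (hedot : HasDerivAt (fun t => η (Sstar.P t)) edot 0)
    (hedot_mem : edot ∈ admissibleDirections ℋ (η P0))
    (hkey : HasDerivAt (fun t => ∫ z, m z (β (Sstar.P t)) (η (Sstar.P t)) ∂P0) (-bdot) 0)
    -- (iv) local product structure for the nuisance directions, with the key
    -- derivative identity along each nuisance coordinate submodel
    (hprod : ∀ h ∈ admissibleDirections ℋ (η P0),
      ∃ (s : Z → ℝ) (S : QMDSubmodel ν model P0 p0 s),
        HasDerivAt (fun t => β (S.P t)) 0 0 ∧
        HasDerivAt (fun t => η (S.P t)) h 0 ∧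
        HasDerivAt (fun t => ∫ z, m z (β (S.P t)) (η (S.P t)) ∂P0) 0 0) :
    HasDerivAt (fun b : ℝ => ∫ z, m z b (η P0) ∂P0) (-1) (β P0) := by
  have hbdot_ne : bdot ≠ 0 := by
    have hval : bdot = c * ∫ z, φstar z ^ 2 ∂P0 := by
      rw [hbdot.unique (hφstar_grad _ Sstar), ← integral_const_mul]
      congr 1 with z
      ring
    rw [hval]
    exact mul_ne_zero hc hφstar_pos.ne'
  have hDF_star : DF (bdot, edot) = -bdot := by
    simp only [← hF] at hkey
    exact (Sstar.zero ▸ hDF).apply_eq_of_hasDerivAt_prodMk hbdot hedot hkey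
  have hDF_nuisance : DF (0, edot) = 0 := by
    obtain ⟨s, S, hβ, hη, hkey₀⟩ := hprod edot hedot_mem
    simp only [← hF] at hkey₀
    exact (S.zero ▸ hDF).apply_eq_of_hasDerivAt_prodMk hβ hη hkey₀
  have hDF_β : DF (1, 0) = -1 := by
    have h := DF.apply_prod_eq_smul_add bdot edot
    rw [hDF_star, hDF_nuisance, add_zero, smul_eq_mul] at h
    exact mul_left_cancel₀ hbdot_ne (h.symm.trans (mul_neg_one bdot).symm)
  simp only [← hF]
  exact hDF_β ▸ hDF.comp_hasDerivAt (β P0) ((hasDerivAt_id _).prodMk (hasDerivAt_const _ _))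

theorem negative_identity
    {V : Type*} [NormedAddCommGroup V] [NormedSpace ℝ V]
    (ν : Measure Z) [SigmaFinite ν]
    (model : Set (Measure Z))
    (P0 : Measure Z) [IsProbabilityMeasure P0]
    (p0 : Z → ℝ) (hp0_meas : Measurable p0) (hp0_nonneg : ∀ᵐ z ∂ν, 0 ≤ p0 z)
    (hp0 : IsDensityOf ν P0 p0)
    (ℋ : Set V) (β : Measure Z → ℝ) (η : Measure Z → V)
    (hη : ∀ P ∈ model, η P ∈ ℋ)
    (m : Z → ℝ → V → ℝ) (hm_meas : ∀ b e, Measurable (fun z => m z b e))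
    -- (i) D = m(·;β₀,η₀) is a gradient (influence function) of β at P₀
    (hgrad : ∀ (s : Z → ℝ) (S : QMDSubmodel ν model P0 p0 s),
      HasDerivAt (fun t => β (S.P t)) (∫ z, m z (β P0) (η P0) * s z ∂P0) 0)
    -- (ii) Fréchet differentiability of (β,η) ↦ E₀[m(Z;β,η)] at (β₀,η₀)
    (F : ℝ × V → ℝ) (hF : ∀ (b : ℝ) (e : V), F (b, e) = ∫ z, m z b e ∂P0)
    (DF : ℝ × V →L[ℝ] ℝ) (hDF : HasFDerivAt F DF (β P0, η P0))
    -- (iii) a score proportional to an influence function φ* with E₀[(φ*)²] > 0,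
    -- realized by a regular submodel with differentiable coordinate path along which
    -- the key derivative identity holds
    (φstar : Z → ℝ) (hφstar_memLp : MemLp φstar 2 P0)
    (hφstar_mean : ∫ z, φstar z ∂P0 = 0)
    (hφstar_grad : ∀ (s : Z → ℝ) (S : QMDSubmodel ν model P0 p0 s),
      HasDerivAt (fun t => β (S.P t)) (∫ z, φstar z * s z ∂P0) 0)
    (hφstar_pos : 0 < ∫ z, (φstar z) ^ 2 ∂P0)
    (c : ℝ) (hc : c ≠ 0)
    (Sstar : QMDSubmodel ν model P0 p0 (fun z => c * φstar z))
    (bdot : ℝ) (edot : V)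
    (hbdot : HasDerivAt (fun t => β (Sstar.P t)) bdot 0)
    (hedot : HasDerivAt (fun t => η (Sstar.P t)) edot 0)
    (hedot_mem : edot ∈ admissibleDirections ℋ (η P0))
    (hkey : HasDerivAt (fun t => ∫ z, m z (β (Sstar.P t)) (η (Sstar.P t)) ∂P0) (-bdot) 0)
    -- (iv) local product structure for the nuisance directions, with the key
    -- derivative identity along each nuisance coordinate submodel
    (hprod : ∀ h ∈ admissibleDirections ℋ (η P0),
      ∃ (s : Z → ℝ) (S : QMDSubmodel ν model P0 p0 s),
        HasDerivAt (fun t => β (S.P t)) 0 0 ∧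
        HasDerivAt (fun t => η (S.P t)) h 0 ∧
        HasDerivAt (fun t => ∫ z, m z (β (S.P t)) (η (S.P t)) ∂P0) 0 0)
    -- (v) β ↦ E₀[m(Z;β,η₀)] is differentiable at β₀
    (hv : ∃ d : ℝ, HasDerivAt (fun b : ℝ => ∫ z, m z b (η P0) ∂P0) d (β P0)) :
    HasDerivAt (fun b : ℝ => ∫ z, m z b (η P0) ∂P0) (-1) (β P0) :=
  negative_identity_general ν model P0 p0 ℋ β η m F hF DF hDF φstar hφstar_grad hφstar_pos c hc
    Sstar bdot edot hbdot hedot hedot_mem hkey hprod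

end Semiparam
end

section
/- Let P₀ be a distribution for Z = (Y, X, A) with |Y| ≤ C_Y almost surely and π(x) := P₀(A=1|X=x) ∈ [ε, 1−ε] almost surely for some ε > 0; set μ_a(x) := E₀[Y|X=x, A=a], β₀ := E₀[μ₁(X) − μ₀(X)]. Then for all P₀,X-essentially bounded functions h₁, h₀, h_π of x, the map t ↦ E₀[m(Z; β₀, (μ₁ + t h₁, μ₀ + t h₀, π + t h_π))] is differentiable at t = 0 with derivative 0, where the expectation is taken under the fixed measure P₀ and only the function arguments of m are varied. In other words, the AIPW estimating function is Neyman orthogonal at (β₀, (μ₁, μ₀, π)). -/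
/-! Write the score at the perturbed nuisances `(μ₁ + d₁, μ₀ + d₀, ρ)` as a sum of the
residuals `A (Y − μ₁(X))`, `(1 − A) (Y − μ₀(X))` and `A − π(X)`, each multiplied by a bounded
function of `X`, plus `μ₁(X) − μ₀(X) − β₀`, plus the mixed bias `w(X) (ρ(X) − π(X))` with
`w = d₁/ρ + d₀/(1 − ρ)`. The residuals have conditional mean zero given `X`, so the expected
score is the expected mixed bias. Along the path `d = t h`, `ρ = π + t h_π` both factors of the
mixed bias are `O(t)`, so the expected score is `O(t²)` and its derivative at `0` vanishes. -/

open MeasureTheory Filter Topology Set ENNReal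

namespace ATE

variable {X : Type*} [MeasurableSpace X]

/-- An observation `z = (y, x, a)`: real outcome, covariates, binary treatment. -/
abbrev Obs (X : Type*) := ℝ × X × Bool

/-- `μa` is (a version of) the conditional outcome mean `E_P[Y | X = x, A = a]`:
it is measurable, integrable, and satisfies the defining conditional-expectation
identity against all measurable sets of covariate values. -/
def IsCondMean (P : Measure (Obs X)) (a : Bool) (μa : X → ℝ) : Prop :=
  Measurable μa ∧ Integrable (fun z : Obs X => μa z.2.1) P ∧
  ∀ B : Set X, MeasurableSet B →
    ∫ z in {z : Obs X | z.2.1 ∈ B ∧ z.2.2 = a}, z.1 ∂P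
      = ∫ z in {z : Obs X | z.2.1 ∈ B ∧ z.2.2 = a}, μa z.2.1 ∂P

/-- `pi` is (a version of) the propensity score `P(A = 1 | X = x)`. -/
def IsPropensity (P : Measure (Obs X)) (pi : X → ℝ) : Prop :=
  Measurable pi ∧
  ∀ B : Set X, MeasurableSet B →
    (P {z : Obs X | z.2.1 ∈ B ∧ z.2.2 = true}).toReal
      = ∫ z in {z : Obs X | z.2.1 ∈ B}, pi z.2.1 ∂P

/-- The AIPW estimating function
`m(z; b, (μ1, μ0, π)) = (a/π(x))(y − μ1(x)) − ((1−a)/(1−π(x)))(y − μ0(x)) + μ1(x) − μ0(x) − b`. -/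
noncomputable def aipw (μ1 μ0 pi : X → ℝ) (b : ℝ) (z : Obs X) : ℝ :=
  (if z.2.2 then (1:ℝ) else 0) / pi z.2.1 * (z.1 - μ1 z.2.1)
    - (1 - if z.2.2 then (1:ℝ) else 0) / (1 - pi z.2.1) * (z.1 - μ0 z.2.1)
    + μ1 z.2.1 - μ0 z.2.1 - b

end ATE

theorem hasDerivAt_zero_of_norm_le_mul_sq {𝕜 F : Type*} [NontriviallyNormedField 𝕜]
    [NormedAddCommGroup F] [NormedSpace 𝕜 F] {f : 𝕜 → F} {x : 𝕜} {C : ℝ}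
    (h : ∀ᶠ y in 𝓝 x, ‖f y‖ ≤ C * ‖y - x‖ ^ 2) : HasDerivAt f 0 x := by
  have hfx : f x = 0 := by simpa using h.self_of_nhds
  rw [hasDerivAt_iff_isLittleO]
  simpa [hfx] using
    (Asymptotics.IsBigO.of_bound C (by simpa using h)).trans_isLittleO
      (Asymptotics.isLittleO_pow_sub_sub x one_lt_two)

theorem abs_div_le_div_of_le {a b c M : ℝ} (hc : 0 < c) (hcb : c ≤ b) (ha : |a| ≤ M) :
    |a / b| ≤ M / c := by
  rw [abs_div, abs_of_pos (hc.trans_le hcb)]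
  exact div_le_div₀ ((abs_nonneg a).trans ha) ha hc hcb

theorem abs_div_add_div_one_sub_le {a b c r A B : ℝ} (hc : 0 < c) (hr : r ∈ Icc c (1 - c))
    (ha : |a| ≤ A) (hb : |b| ≤ B) : |a / r + b / (1 - r)| ≤ A / c + B / c :=
  (abs_add_le _ _).trans (add_le_add (abs_div_le_div_of_le hc hr.1 ha)
    (abs_div_le_div_of_le hc (by linarith [hr.2]) hb))

theorem abs_mul_div_add_mul_div_one_sub_mul_mul_le {t a b e c r A B E : ℝ} (hc : 0 < c)
    (hr : r ∈ Icc c (1 - c)) (ha : |a| ≤ A) (hb : |b| ≤ B) (he : |e| ≤ E) :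
    |(t * a / r + t * b / (1 - r)) * (t * e)| ≤ (A / c + B / c) * E * t ^ 2 := by
  have hw := abs_div_add_div_one_sub_le hc hr ha hb
  calc |(t * a / r + t * b / (1 - r)) * (t * e)| = |a / r + b / (1 - r)| * |e| * t ^ 2 := by
        rw [← abs_mul, ← sq_abs t, ← abs_pow, ← abs_mul]
        ring_nf
    _ ≤ (A / c + B / c) * E * t ^ 2 := by
        gcongr
        exact (abs_nonneg _).trans hw

theorem eventually_ae_add_mul_mem_Icc {Ω : Type*} {mΩ : MeasurableSpace Ω} {P : Measure Ω}
    {f g : Ω → ℝ} {ε M : ℝ} (hε : 0 < ε) (hf : ∀ᵐ ω ∂P, f ω ∈ Icc ε (1 - ε))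
    (hg : ∀ᵐ ω ∂P, |g ω| ≤ M) :
    ∀ᶠ t in 𝓝 (0 : ℝ), ∀ᵐ ω ∂P, f ω + t * g ω ∈ Icc (ε / 2) (1 - ε / 2) := by
  filter_upwards [((continuous_abs.mul continuous_const).tendsto' (0 : ℝ) 0 (by simp)).eventually
    (eventually_le_nhds (half_pos hε))] with t ht
  filter_upwards [hf, hg] with ω hfω hgω
  have := abs_le.mp ((abs_mul t _).trans_le
    ((mul_le_mul_of_nonneg_left hgω (abs_nonneg t)).trans ht))
  constructor <;> linarith [hfω.1, hfω.2]

theorem integral_comp_mul_eq_zero_of_setIntegral_preimage_eq_zero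
    {Ω S : Type*} {mΩ : MeasurableSpace Ω} {mS : MeasurableSpace S} {P : Measure Ω}
    [IsFiniteMeasure P] {φ : Ω → S} (hφ : Measurable φ) {f : Ω → ℝ} (hf : Integrable f P)
    (hf0 : ∀ B, MeasurableSet B → ∫ ω in φ ⁻¹' B, f ω ∂P = 0)
    {g : S → ℝ} (hg : Measurable g) {M : ℝ} (hgM : ∀ᵐ ω ∂P, ‖g (φ ω)‖ ≤ M) :
    ∫ ω, g (φ ω) * f ω ∂P = 0 := by
  have hm : mS.comap φ ≤ mΩ := hφ.comap_le
  have hgφ : StronglyMeasurable[mS.comap φ] (g ∘ φ) :=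
    (hg.comp (comap_measurable φ)).stronglyMeasurable
  have hcond : P[f | mS.comap φ] =ᵐ[P] fun _ => 0 := by
    refine (ae_eq_condExp_of_forall_setIntegral_eq (g := fun _ => 0) hm hf
      (fun _ _ _ => integrableOn_const) ?_ stronglyMeasurable_const.aestronglyMeasurable).symm
    rintro _ ⟨B, hB, rfl⟩ _
    rw [integral_zero, hf0 B hB]
  calc ∫ ω, g (φ ω) * f ω ∂P = ∫ ω, (P[(g ∘ φ) * f | mS.comap φ]) ω ∂P :=
        (integral_condExp hm).symm
    _ = ∫ ω, g (φ ω) * (P[f | mS.comap φ]) ω ∂P :=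
        integral_congr_ae (condExp_mul_of_stronglyMeasurable_left hgφ
          (hf.bdd_mul (hg.comp hφ).aestronglyMeasurable hgM) hf)
    _ = ∫ ω, g (φ ω) * 0 ∂P := integral_congr_ae (hcond.mono fun ω hω => by simp [hω])
    _ = 0 := by simp

namespace ATE

theorem ite_treatment_mul_eq_indicator {X : Type*} (a : Bool) (f : Obs X → ℝ) :
    (fun z : Obs X => (if z.2.2 = a then (1 : ℝ) else 0) * f z)
      = {z : Obs X | z.2.2 = a}.indicator f := by
  ext z
  by_cases hz : z.2.2 = a <;> simp [hz]

theorem aipw_add_eq {X : Type*} {μ1 μ0 d1 d0 ρ : X → ℝ} (pi : X → ℝ) (b : ℝ) {z : Obs X}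
    (hρ : ρ z.2.1 ≠ 0) (hρ' : 1 - ρ z.2.1 ≠ 0) :
    aipw (fun x => μ1 x + d1 x) (fun x => μ0 x + d0 x) ρ b z
      = 1 / ρ z.2.1 * ((if z.2.2 = true then (1 : ℝ) else 0) * (z.1 - μ1 z.2.1))
        - 1 / (1 - ρ z.2.1) * ((if z.2.2 = false then (1 : ℝ) else 0) * (z.1 - μ0 z.2.1))
        - (d1 z.2.1 / ρ z.2.1 + d0 z.2.1 / (1 - ρ z.2.1))
          * ((if z.2.2 = true then (1 : ℝ) else 0) - pi z.2.1)
        + (μ1 z.2.1 - μ0 z.2.1 - b)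
        + (d1 z.2.1 / ρ z.2.1 + d0 z.2.1 / (1 - ρ z.2.1)) * (ρ z.2.1 - pi z.2.1) := by
  rcases z with ⟨y, x, _ | _⟩ <;>
    simp only [aipw, if_true, if_false, Bool.false_eq_true, reduceCtorEq] at * <;>
    field_simp <;> ring

variable {X : Type*} [MeasurableSpace X] {P : Measure (Obs X)}

theorem measurableSet_treatment_eq (a : Bool) : MeasurableSet {z : Obs X | z.2.2 = a} :=
  measurable_snd.snd (measurableSet_singleton a)

theorem IsCondMean.integrable_residual {a : Bool} {μa : X → ℝ} (h : IsCondMean P a μa)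
    (hY : Integrable (fun z : Obs X => z.1) P) :
    Integrable (fun z : Obs X => (if z.2.2 = a then (1 : ℝ) else 0) * (z.1 - μa z.2.1)) P := by
  rw [ite_treatment_mul_eq_indicator]
  exact (hY.sub h.2.1).indicator (measurableSet_treatment_eq a)

theorem IsCondMean.setIntegral_residual_eq_zero {a : Bool} {μa : X → ℝ}
    (h : IsCondMean P a μa) (hY : Integrable (fun z : Obs X => z.1) P)
    {B : Set X} (hB : MeasurableSet B) :
    ∫ z in {z : Obs X | z.2.1 ∈ B},
      (if z.2.2 = a then (1 : ℝ) else 0) * (z.1 - μa z.2.1) ∂P = 0 := by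
  rw [ite_treatment_mul_eq_indicator, setIntegral_indicator (measurableSet_treatment_eq a),
    integral_sub hY.integrableOn h.2.1.integrableOn]
  exact sub_eq_zero.mpr (h.2.2 B hB)

theorem IsCondMean.integral_mul_residual_eq_zero [IsFiniteMeasure P] {a : Bool} {μa : X → ℝ}
    (h : IsCondMean P a μa) (hY : Integrable (fun z : Obs X => z.1) P) {g : X → ℝ}
    (hg : Measurable g) {M : ℝ} (hgM : ∀ᵐ z ∂P, ‖g z.2.1‖ ≤ M) :
    ∫ z, g z.2.1 * ((if z.2.2 = a then (1 : ℝ) else 0) * (z.1 - μa z.2.1)) ∂P = 0 :=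
  integral_comp_mul_eq_zero_of_setIntegral_preimage_eq_zero (by fun_prop)
    (h.integrable_residual hY) (fun _ hB => h.setIntegral_residual_eq_zero hY hB) hg hgM

theorem integrable_ite_treatment_eq [IsFiniteMeasure P] (a : Bool) :
    Integrable (fun z : Obs X => if z.2.2 = a then (1 : ℝ) else 0) P := by
  simpa [← ite_treatment_mul_eq_indicator] using
    (integrable_const (1 : ℝ)).indicator (μ := P) (measurableSet_treatment_eq a)

theorem IsPropensity.setIntegral_residual_eq_zero [IsFiniteMeasure P] {pi : X → ℝ}
    (h : IsPropensity P pi) (hpi : Integrable (fun z : Obs X => pi z.2.1) P)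
    {B : Set X} (hB : MeasurableSet B) :
    ∫ z in {z : Obs X | z.2.1 ∈ B},
      ((if z.2.2 = true then (1 : ℝ) else 0) - pi z.2.1) ∂P = 0 := by
  have hind := ite_treatment_mul_eq_indicator (X := X) true fun _ => 1
  simp only [mul_one] at hind
  rw [integral_sub (integrable_ite_treatment_eq true).integrableOn hpi.integrableOn, hind,
    setIntegral_indicator (measurableSet_treatment_eq true), setIntegral_const, smul_eq_mul,
    mul_one, measureReal_def]
  exact sub_eq_zero.mpr (h.2 B hB)

theorem IsPropensity.integral_mul_residual_eq_zero [IsFiniteMeasure P] {pi : X → ℝ}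
    (h : IsPropensity P pi) (hpi : Integrable (fun z : Obs X => pi z.2.1) P) {g : X → ℝ}
    (hg : Measurable g) {M : ℝ} (hgM : ∀ᵐ z ∂P, ‖g z.2.1‖ ≤ M) :
    ∫ z, g z.2.1 * ((if z.2.2 = true then (1 : ℝ) else 0) - pi z.2.1) ∂P = 0 :=
  integral_comp_mul_eq_zero_of_setIntegral_preimage_eq_zero (by fun_prop)
    ((integrable_ite_treatment_eq true).sub hpi)
    (fun _ hB => h.setIntegral_residual_eq_zero hpi hB) hg hgM

theorem integral_aipw_add_eq [IsProbabilityMeasure P]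
    (hY : Integrable (fun z : Obs X => z.1) P)
    {μ1 μ0 : X → ℝ} (hμ1 : IsCondMean P true μ1) (hμ0 : IsCondMean P false μ0)
    {pi : X → ℝ} (hpi : IsPropensity P pi) (hpi_int : Integrable (fun z : Obs X => pi z.2.1) P)
    {d1 d0 ρ : X → ℝ} (hd1 : Measurable d1) (hd0 : Measurable d0) (hρ : Measurable ρ)
    {c : ℝ} (hc : 0 < c) (hρc : ∀ᵐ z ∂P, ρ z.2.1 ∈ Icc c (1 - c))
    {M1 M0 : ℝ} (hd1M : ∀ᵐ z ∂P, |d1 z.2.1| ≤ M1) (hd0M : ∀ᵐ z ∂P, |d0 z.2.1| ≤ M0) :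
    ∫ z, aipw (fun x => μ1 x + d1 x) (fun x => μ0 x + d0 x) ρ
        (∫ z', (μ1 z'.2.1 - μ0 z'.2.1) ∂P) z ∂P
      = ∫ z, (d1 z.2.1 / ρ z.2.1 + d0 z.2.1 / (1 - ρ z.2.1)) * (ρ z.2.1 - pi z.2.1) ∂P := by
  set β := ∫ z', (μ1 z'.2.1 - μ0 z'.2.1) ∂P
  let w : X → ℝ := fun x => d1 x / ρ x + d0 x / (1 - ρ x)
  let r1 : Obs X → ℝ := fun z => (if z.2.2 = true then 1 else 0) * (z.1 - μ1 z.2.1)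
  let r0 : Obs X → ℝ := fun z => (if z.2.2 = false then 1 else 0) * (z.1 - μ0 z.2.1)
  let rA : Obs X → ℝ := fun z => (if z.2.2 = true then 1 else 0) - pi z.2.1
  have hX : Measurable fun z : Obs X => z.2.1 := by fun_prop
  have hg1 : Measurable fun x => 1 / ρ x := by fun_prop
  have hg0 : Measurable fun x => 1 / (1 - ρ x) := by fun_prop
  have hwm : Measurable w := by fun_prop
  have hinv1 : ∀ᵐ z ∂P, ‖1 / ρ z.2.1‖ ≤ 1 / c :=
    hρc.mono fun z hz => abs_div_le_div_of_le hc hz.1 (abs_one (α := ℝ)).le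
  have hinv0 : ∀ᵐ z ∂P, ‖1 / (1 - ρ z.2.1)‖ ≤ 1 / c :=
    hρc.mono fun z hz => abs_div_le_div_of_le hc (by linarith [hz.2]) (abs_one (α := ℝ)).le
  have hw : ∀ᵐ z ∂P, ‖w z.2.1‖ ≤ M1 / c + M0 / c := by
    filter_upwards [hρc, hd1M, hd0M] with z hz h1 h0
    exact abs_div_add_div_one_sub_le hc hz h1 h0
  have hρ_int : Integrable (fun z : Obs X => ρ z.2.1) P :=
    .of_mem_Icc c (1 - c) (hρ.comp hX).aemeasurable hρc
  have hA : Integrable rA P := (integrable_ite_treatment_eq true).sub hpi_int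
  have i1 : Integrable (fun z => 1 / ρ z.2.1 * r1 z) P :=
    (hμ1.integrable_residual hY).bdd_mul (hg1.comp hX).aestronglyMeasurable hinv1
  have i0 : Integrable (fun z => 1 / (1 - ρ z.2.1) * r0 z) P :=
    (hμ0.integrable_residual hY).bdd_mul (hg0.comp hX).aestronglyMeasurable hinv0
  have iA : Integrable (fun z => w z.2.1 * rA z) P :=
    hA.bdd_mul (hwm.comp hX).aestronglyMeasurable hw
  have hμ10 : Integrable (fun z : Obs X => μ1 z.2.1 - μ0 z.2.1) P := hμ1.2.1.sub hμ0.2.1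
  have iβ : Integrable (fun z : Obs X => μ1 z.2.1 - μ0 z.2.1 - β) P :=
    hμ10.sub (integrable_const β)
  have ib : Integrable (fun z => w z.2.1 * (ρ z.2.1 - pi z.2.1)) P :=
    (hρ_int.sub hpi_int).bdd_mul (hwm.comp hX).aestronglyMeasurable hw
  have hdecomp : (fun z => aipw (fun x => μ1 x + d1 x) (fun x => μ0 x + d0 x) ρ β z)
      =ᵐ[P] (fun z => 1 / ρ z.2.1 * r1 z) - (fun z => 1 / (1 - ρ z.2.1) * r0 z)
        - (fun z => w z.2.1 * rA z) + (fun z => μ1 z.2.1 - μ0 z.2.1 - β)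
        + (fun z => w z.2.1 * (ρ z.2.1 - pi z.2.1)) :=
    hρc.mono fun z hz => aipw_add_eq pi β (by linarith [hz.1]) (by linarith [hz.2])
  have z1 : ∫ z, 1 / ρ z.2.1 * r1 z ∂P = 0 := hμ1.integral_mul_residual_eq_zero hY hg1 hinv1
  have z0 : ∫ z, 1 / (1 - ρ z.2.1) * r0 z ∂P = 0 :=
    hμ0.integral_mul_residual_eq_zero hY hg0 hinv0
  have zA : ∫ z, w z.2.1 * rA z ∂P = 0 := hpi.integral_mul_residual_eq_zero hpi_int hwm hw
  have zβ : ∫ z, (μ1 z.2.1 - μ0 z.2.1 - β) ∂P = 0 := by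
    rw [integral_sub hμ10 (integrable_const β), integral_const]
    simp [β]
  rw [integral_congr_ae hdecomp, integral_add' (((i1.sub i0).sub iA).add iβ) ib,
    integral_add' ((i1.sub i0).sub iA) iβ, integral_sub' (i1.sub i0) iA, integral_sub' i1 i0,
    z1, z0, zA, zβ]
  simp [w]

theorem aipw_neyman_orthogonal
    (P0 : Measure (Obs X)) [IsProbabilityMeasure P0]
    (CY eps : ℝ) (heps : 0 < eps)
    (hY : ∀ᵐ z ∂P0, |z.1| ≤ CY)
    (μ : Bool → X → ℝ) (hμ : ∀ a, IsCondMean P0 a (μ a))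
    (pi : X → ℝ) (hpi : IsPropensity P0 pi)
    (hpi_range : ∀ᵐ z ∂P0, pi z.2.1 ∈ Set.Icc eps (1 - eps))
    (h1 h0 hp : X → ℝ)
    (h1_meas : Measurable h1) (h0_meas : Measurable h0) (hp_meas : Measurable hp)
    (h1_bdd : ∃ M1 : ℝ, ∀ᵐ z ∂P0, |h1 z.2.1| ≤ M1)
    (h0_bdd : ∃ M0 : ℝ, ∀ᵐ z ∂P0, |h0 z.2.1| ≤ M0)
    (hp_bdd : ∃ Mp : ℝ, ∀ᵐ z ∂P0, |hp z.2.1| ≤ Mp) :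
    HasDerivAt (fun t : ℝ => ∫ z, aipw
        (fun x => μ true x + t * h1 x)
        (fun x => μ false x + t * h0 x)
        (fun x => pi x + t * hp x)
        (∫ z', (μ true z'.2.1 - μ false z'.2.1) ∂P0) z ∂P0)
      0 0 := by
  obtain ⟨M1, hM1⟩ := h1_bdd
  obtain ⟨M0, hM0⟩ := h0_bdd
  obtain ⟨Mp, hMp⟩ := hp_bdd
  have hc : 0 < eps / 2 := half_pos heps
  have hpi_meas := hpi.1
  have hY_int : Integrable (fun z : Obs X => z.1) P0 :=
    .of_bound measurable_fst.aestronglyMeasurable CY hY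
  have hpi_int : Integrable (fun z : Obs X => pi z.2.1) P0 :=
    .of_mem_Icc eps (1 - eps) (by fun_prop) hpi_range
  set C := (M1 / (eps / 2) + M0 / (eps / 2)) * Mp
  refine hasDerivAt_zero_of_norm_le_mul_sq (C := C) ?_
  filter_upwards [eventually_ae_add_mul_mem_Icc heps hpi_range hMp] with t hρ
  rw [integral_aipw_add_eq hY_int (hμ true) (hμ false) hpi hpi_int (by fun_prop) (by fun_prop)
    (by fun_prop) hc hρ (M1 := |t| * M1) (M0 := |t| * M0)
    (hM1.mono fun z hz => by rw [abs_mul]; gcongr) (hM0.mono fun z hz => by rw [abs_mul]; gcongr)]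
  refine (norm_integral_le_of_norm_le_const (C := C * t ^ 2) ?_).trans_eq (by simp)
  filter_upwards [hρ, hM1, hM0, hMp] with z hz hz1 hz0 hzp
  rw [Real.norm_eq_abs, add_sub_cancel_left]
  exact abs_mul_div_add_mul_div_one_sub_mul_mul_le hc hz hz1 hz0 hzp

end ATE
end

section
/- Let P₀ be a distribution for Z = (Y, X, A) with density p₀ with respect to a σ-finite measure ν, with |Y| ≤ C_Y almost surely and π(x) := P₀(A=1|X=x) ∈ [ε, 1−ε] almost surely; set μ_a(x) := E₀[Y|X=x,A=a], τ(x) := μ₁(x) − μ₀(x), β₀ := E₀[τ(X)], and let φ(Z) := (A/π(X))(Y − μ₁(X)) − ((1−A)/(1−π(X)))(Y − μ₀(X)) + τ(X) − β₀. Then for every P₀-essentially bounded g with E₀[g] = 0 and the linear tilt submodel P_t with density p₀(1 + t g), the map t ↦ β(P_t) := E_{P_t}[μ₁^{P_t}(X) − μ₀^{P_t}(X)] is differentiable at t = 0 with (d/dt) β(P_t) |_{t=0} = E₀[φ(Z) g(Z)]. -/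
/-! STATEMENT 17: pathwise differentiability of the ATE along linear tilt submodels:
(d/dt) β(P_t)|₀ = E₀[φ(Z) g(Z)] where φ is the (efficient) influence function of the
average treatment effect. -/

open MeasureTheory Filter Topology Set ENNReal

namespace ATE

variable {X : Type*} [MeasurableSpace X]

/-- `p` is a density of `P` with respect to `ν`. -/
def IsDensityOf {Z : Type*} [MeasurableSpace Z] (ν P : Measure Z) (p : Z → ℝ) : Prop :=
  P = ν.withDensity (fun z => ENNReal.ofReal (p z))

/-!
Write `r_a, h_a, k_a, s_a` for the `P₀`-conditional expectations given `X` of `1{A=a}`,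
`1{A=a} Y`, `1{A=a} Y g` and `1{A=a} g`. Under the tilted law `P_t = (1 + t g) P₀`, Bayes' formula
gives the regression of `Y` on arm `a` as `(h_a + t k_a) / (r_a + t s_a)`, so that
`β(P_t) = Σ_a ± E₀[(h_a + t k_a) / (r_a + t s_a) · (1 + t g)]`. Since `r₁ = π` and `r₀ = 1 - π`
are at least `ε`, the denominators stay above `ε / 2` for small `t`, and each term may be
differentiated under the integral sign; at `t = 0` this gives `E₀[(k_a - μ_a s_a) / r_a + μ_a g]`.
As `1 / r_a` and `μ_a / r_a` are functions of `X`, the tower property rewrites this as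
`E₀[(1{A=a} (Y - μ_a) / r_a + μ_a) g]`, the arm-`a` part of `E₀[φ g]`; the constant `β₀` drops out
because `E₀[g] = 0`.
-/

theorem abs_mul_le_of_abs_le_one {x y C : ℝ} (hx : |x| ≤ 1) (hy : |y| ≤ C) : |x * y| ≤ C :=
  (abs_mul x y).trans_le ((mul_le_of_le_one_left (abs_nonneg y) hx).trans hy)

theorem abs_mul_mul_le_of_abs_le_one {x y w C M : ℝ} (hx : |x| ≤ 1) (hy : |y| ≤ C)
    (hw : |w| ≤ M) : |x * y * w| ≤ C * M := by
  rw [abs_mul]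
  exact mul_le_mul (abs_mul_le_of_abs_le_one hx hy) hw (abs_nonneg w) ((abs_nonneg y).trans hy)

theorem abs_div_le_of_le {x y A ε : ℝ} (hε : 0 < ε) (hx : |x| ≤ A) (hy : ε ≤ y) :
    |x / y| ≤ A / ε := by
  rw [abs_div, abs_of_pos (hε.trans_le hy)]
  exact div_le_div₀ ((abs_nonneg x).trans hx) hx hε hy

theorem pos_add_mul_of_abs_le {r y t M : ℝ} (hy : |y| ≤ M) (h : |t| * M < r) :
    0 < r + t * y := by
  have : |t * y| ≤ |t| * M := by rw [abs_mul]; exact mul_le_mul_of_nonneg_left hy (abs_nonneg t)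
  linarith [neg_abs_le (t * y)]

theorem eventually_abs_mul_lt (M : ℝ) {c : ℝ} (hc : 0 < c) :
    ∀ᶠ t in 𝓝 (0 : ℝ), |t| * M < c := by
  have h : Tendsto (fun t : ℝ => |t| * M) (𝓝 0) (𝓝 0) :=
    (continuous_abs.mul continuous_const).tendsto' 0 0 (by simp)
  exact h.eventually (gt_mem_nhds hc)

theorem hasDerivAt_affine_div {a b c d t : ℝ} (h : c + t * d ≠ 0) :
    HasDerivAt (fun t => (a + t * b) / (c + t * d))
      ((b - (a + t * b) / (c + t * d) * d) / (c + t * d)) t := by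
  refine (((hasDerivAt_mul_const b).const_add a).div
    ((hasDerivAt_mul_const d).const_add c) h).congr_deriv ?_
  field_simp

theorem abs_deriv_affine_div_mul_le {h k r s g t C ε : ℝ} (hε : 0 < ε) (hh : |h| ≤ C)
    (hk : |k| ≤ C) (hs : |s| ≤ C) (hg : |g| ≤ C) (hr : ε ≤ r) (htk : |t * k| ≤ ε / 2)
    (hts : |t * s| ≤ ε / 2) (htg : |t * g| ≤ ε / 2) :
    |(k - (h + t * k) / (r + t * s) * s) / (r + t * s) * (1 + t * g)
        + (h + t * k) / (r + t * s) * g|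
      ≤ (C + (C + ε / 2) / (ε / 2) * C) / (ε / 2) * (1 + ε / 2)
        + (C + ε / 2) / (ε / 2) * C := by
  have hε2 : 0 < ε / 2 := half_pos hε
  have hden : ε / 2 ≤ r + t * s := by linarith [(abs_le.1 hts).1]
  have hq : |(h + t * k) / (r + t * s)| ≤ (C + ε / 2) / (ε / 2) :=
    abs_div_le_of_le hε2 ((abs_add_le _ _).trans (add_le_add hh htk)) hden
  have hQ : 0 ≤ (C + ε / 2) / (ε / 2) := (abs_nonneg _).trans hq
  have hnum : |k - (h + t * k) / (r + t * s) * s| ≤ C + (C + ε / 2) / (ε / 2) * C := by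
    refine (abs_sub _ _).trans (add_le_add hk ?_)
    rw [abs_mul]
    exact mul_le_mul hq hs (abs_nonneg _) hQ
  have htilt : |1 + t * g| ≤ 1 + ε / 2 := (abs_add_le _ _).trans (by rw [abs_one]; linarith)
  refine (abs_add_le _ _).trans (add_le_add ?_ ?_) <;> rw [abs_mul]
  · exact mul_le_mul (abs_div_le_of_le hε2 hnum hden) htilt (abs_nonneg _)
      ((abs_nonneg _).trans (abs_div_le_of_le hε2 hnum hden))
  · exact mul_le_mul hq hg (abs_nonneg _) hQ

theorem hasDerivAt_integral_affine_div_mul {Ω : Type*} [MeasurableSpace Ω] {P : Measure Ω}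
    [IsFiniteMeasure P] {h k r s g : Ω → ℝ} (hh : Measurable h) (hk : Measurable k)
    (hr : Measurable r) (hs : Measurable s) (hg : Measurable g) {C ε : ℝ} (hε : 0 < ε)
    (hhC : ∀ᵐ z ∂P, |h z| ≤ C) (hkC : ∀ᵐ z ∂P, |k z| ≤ C) (hsC : ∀ᵐ z ∂P, |s z| ≤ C)
    (hgC : ∀ᵐ z ∂P, |g z| ≤ C) (hrε : ∀ᵐ z ∂P, ε ≤ r z) :
    HasDerivAt (fun t => ∫ z, (h z + t * k z) / (r z + t * s z) * (1 + t * g z) ∂P)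
      (∫ z, ((k z - h z / r z * s z) / r z + h z / r z * g z) ∂P) 0 := by
  set ρ := ε / (2 * (|C| + 1))
  have hρ : 0 < ρ := by positivity
  have hsmall : ∀ t ∈ Metric.ball (0 : ℝ) ρ, ∀ x : ℝ, |x| ≤ C → |t * x| ≤ ε / 2 := by
    intro t ht x hx
    rw [mem_ball_zero_iff, Real.norm_eq_abs] at ht
    calc |t * x| = |t| * |x| := abs_mul t x
      _ ≤ ρ * |C| := mul_le_mul ht.le (hx.trans (le_abs_self C)) (abs_nonneg x) hρ.le
      _ ≤ ε / 2 := by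
        rw [div_mul_eq_mul_div, div_le_div_iff₀ (by positivity) two_pos]
        nlinarith [abs_nonneg C]
  have hden : ∀ᵐ z ∂P, ∀ t ∈ Metric.ball (0 : ℝ) ρ, ε / 2 ≤ r z + t * s z := by
    filter_upwards [hsC, hrε] with z hs hr t ht
    linarith [(abs_le.1 (hsmall t ht _ hs)).1]
  have hderiv := hasDerivAt_integral_of_dominated_loc_of_deriv_le (Metric.ball_mem_nhds 0 hρ)
    (F := fun t z => (h z + t * k z) / (r z + t * s z) * (1 + t * g z))
    (F' := fun t z => (k z - (h z + t * k z) / (r z + t * s z) * s z) / (r z + t * s z)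
      * (1 + t * g z) + (h z + t * k z) / (r z + t * s z) * g z)
    (bound := fun _ => (C + (C + ε / 2) / (ε / 2) * C) / (ε / 2) * (1 + ε / 2)
        + (C + ε / 2) / (ε / 2) * C)
    (.of_forall fun t => (by fun_prop : Measurable _).aestronglyMeasurable)
    (Integrable.of_bound (by fun_prop : Measurable _).aestronglyMeasurable (C / ε) (by
      filter_upwards [hhC, hrε] with z hh hr
      simpa only [zero_mul, add_zero, mul_one, Real.norm_eq_abs]
        using abs_div_le_of_le hε hh hr))
    (by fun_prop : Measurable _).aestronglyMeasurable
    (by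
      filter_upwards [hhC, hkC, hsC, hgC, hrε] with z hh hk hs hg hr t ht
      exact abs_deriv_affine_div_mul_le hε hh hk hs hg hr (hsmall t ht _ hk)
        (hsmall t ht _ hs) (hsmall t ht _ hg))
    (integrable_const _)
    (by
      filter_upwards [hden] with z hz t ht
      exact (hasDerivAt_affine_div ((half_pos hε).trans_le (hz t ht)).ne').mul
        ((hasDerivAt_mul_const (g z)).const_add 1))
  simpa only [zero_mul, add_zero, mul_one] using hderiv.2

section WithDensity

variable {Ω : Type*} [MeasurableSpace Ω] {P : Measure Ω} {w : Ω → ℝ}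

theorem integrable_of_ae_abs_le [IsFiniteMeasure P] {f : Ω → ℝ} (C : ℝ) (hf : Measurable f)
    (hfC : ∀ᵐ z ∂P, |f z| ≤ C) : Integrable f P :=
  .of_bound hf.aestronglyMeasurable C (by simpa only [Real.norm_eq_abs] using hfC)

theorem setIntegral_withDensity_ofReal (hw : Measurable w) (hw₀ : ∀ᵐ z ∂P, 0 ≤ w z)
    {S : Set Ω} (hS : MeasurableSet S) (f : Ω → ℝ) :
    ∫ z in S, f z ∂P.withDensity (fun z => ENNReal.ofReal (w z)) = ∫ z in S, w z * f z ∂P := by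
  rw [setIntegral_withDensity_eq_setIntegral_toReal_smul hw.ennreal_ofReal
    (.of_forall fun _ => ofReal_lt_top) f hS]
  refine integral_congr_ae (ae_restrict_of_ae ?_)
  filter_upwards [hw₀] with z hz
  rw [toReal_ofReal hz, smul_eq_mul]

theorem integral_withDensity_ofReal (hw : Measurable w) (hw₀ : ∀ᵐ z ∂P, 0 ≤ w z)
    (f : Ω → ℝ) :
    ∫ z, f z ∂P.withDensity (fun z => ENNReal.ofReal (w z)) = ∫ z, w z * f z ∂P := by
  simpa only [Measure.restrict_univ] using setIntegral_withDensity_ofReal hw hw₀ .univ f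

theorem integrable_withDensity_ofReal_iff (hw : Measurable w) (hw₀ : ∀ᵐ z ∂P, 0 ≤ w z)
    {f : Ω → ℝ} :
    Integrable f (P.withDensity fun z => ENNReal.ofReal (w z))
      ↔ Integrable (fun z => w z * f z) P := by
  rw [integrable_withDensity_iff_integrable_smul' hw.ennreal_ofReal
    (.of_forall fun _ => ofReal_lt_top)]
  refine integrable_congr ?_
  filter_upwards [hw₀] with z hz
  rw [toReal_ofReal hz, smul_eq_mul]

theorem withDensity_ofReal_mul {ν : Measure Ω} {p : Ω → ℝ} (hp : Measurable p)
    (hp₀ : ∀ᵐ z ∂ν, 0 ≤ p z) (hw : Measurable w) :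
    ν.withDensity (fun z => ENNReal.ofReal (p z * w z))
      = (ν.withDensity fun z => ENNReal.ofReal (p z)).withDensity
          fun z => ENNReal.ofReal (w z) := by
  rw [← withDensity_mul ν hp.ennreal_ofReal hw.ennreal_ofReal]
  refine withDensity_congr_ae ?_
  filter_upwards [hp₀] with z hz
  exact ofReal_mul hz

end WithDensity

section CondExp

variable {Ω : Type*} {m m₀ : MeasurableSpace Ω} {P : @Measure Ω m₀}

theorem integral_mul_condExp_of_bound [IsFiniteMeasure P] (hm : m ≤ m₀) {c f : Ω → ℝ}
    (hc : StronglyMeasurable[m] c) {C : ℝ} (hcC : ∀ᵐ z ∂P, |c z| ≤ C) (hf : Integrable f P) :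
    ∫ z, c z * f z ∂P = ∫ z, c z * P[f|m] z ∂P := by
  rw [← integral_condExp hm]
  exact integral_congr_ae (condExp_stronglyMeasurable_mul_of_bound hm hc hf C hcC)

theorem condExp_ae_eq_of_forall_setIntegral_eq [IsFiniteMeasure P] (hm : m ≤ m₀) {f₁ f₂ : Ω → ℝ}
    (hf₁ : Integrable f₁ P) (hf₂ : Integrable f₂ P)
    (h : ∀ s, MeasurableSet[m] s → ∫ z in s, f₁ z ∂P = ∫ z in s, f₂ z ∂P) :
    P[f₁|m] =ᵐ[P] P[f₂|m] :=
  (ae_eq_condExp_of_forall_setIntegral_eq hm hf₁ (fun _ _ _ => integrable_condExp.integrableOn)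
    (fun s hs _ => by rw [setIntegral_condExp hm hf₂ hs, h s hs])
    stronglyMeasurable_condExp.aestronglyMeasurable).symm

theorem condExp_mul_one_add_mul {f g : Ω → ℝ} (t : ℝ) (hf : Integrable f P)
    (hfg : Integrable (fun z => f z * g z) P) :
    P[fun z => f z * (1 + t * g z)|m] =ᵐ[P] fun z => P[f|m] z + t * P[fun z => f z * g z|m] z := by
  have hsplit : (fun z => f z * (1 + t * g z)) = f + t • fun z => f z * g z := by
    ext z; simp only [Pi.add_apply, Pi.smul_apply, smul_eq_mul]; ring
  rw [hsplit]
  filter_upwards [condExp_add hf (hfg.smul t) m, condExp_smul (m := m) t (fun z => f z * g z)]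
    with z hadd hsmul
  rw [hadd, Pi.add_apply, hsmul, Pi.smul_apply, smul_eq_mul]

end CondExp

section Arm

variable {Ω : Type*} {m m₀ : MeasurableSpace Ω} {P : @Measure Ω m₀}

/- With `D = 1{A=a}` and `m = σ(X)`: `armMean` is `E[Y | X, A = a]`, `tiltedArmMean` is the same
regression under the tilted law `(1 + t g) P`, and `armScore` is the arm-`a` term of the AIPW
influence function. -/
noncomputable def armMean (m : MeasurableSpace Ω) (P : @Measure Ω m₀) (D Y : Ω → ℝ) (z : Ω) : ℝ :=
  P[fun z => D z * Y z|m] z / P[D|m] z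

noncomputable def tiltedArmMean (m : MeasurableSpace Ω) (P : @Measure Ω m₀) (D Y g : Ω → ℝ)
    (t : ℝ) (z : Ω) : ℝ :=
  (P[fun z => D z * Y z|m] z + t * P[fun z => D z * Y z * g z|m] z)
    / (P[D|m] z + t * P[fun z => D z * g z|m] z)

noncomputable def armScore (m : MeasurableSpace Ω) (P : @Measure Ω m₀) (D Y : Ω → ℝ) (z : Ω) :
    ℝ :=
  D z * (Y z - armMean m P D Y z) / P[D|m] z + armMean m P D Y z

variable {D Y g : Ω → ℝ} {CY M ε : ℝ}

theorem ae_abs_armMean_le (hε : 0 < ε) (hD : ∀ᵐ z ∂P, |D z| ≤ 1) (hY : ∀ᵐ z ∂P, |Y z| ≤ CY)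
    (hr : ∀ᵐ z ∂P, ε ≤ P[D|m] z) : ∀ᵐ z ∂P, |armMean m P D Y z| ≤ CY / ε := by
  have hDY : ∀ᵐ z ∂P, |D z * Y z| ≤ CY := by
    filter_upwards [hD, hY] with z hD hY using abs_mul_le_of_abs_le_one hD hY
  filter_upwards [ae_bdd_abs_condExp_of_ae_bdd_abs (m := m) hDY, hr] with z hh hr
  exact abs_div_le_of_le hε hh hr

theorem stronglyMeasurable_armMean : StronglyMeasurable[m] (armMean m P D Y) :=
  (stronglyMeasurable_condExp.measurable.div
    stronglyMeasurable_condExp.measurable).stronglyMeasurable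

theorem integral_armScore_mul [IsFiniteMeasure P] (hm : m ≤ m₀) (hDm : Measurable D)
    (hYm : Measurable Y) (hgm : Measurable g) (hε : 0 < ε) (hD : ∀ᵐ z ∂P, |D z| ≤ 1)
    (hY : ∀ᵐ z ∂P, |Y z| ≤ CY) (hg : ∀ᵐ z ∂P, |g z| ≤ M) (hr : ∀ᵐ z ∂P, ε ≤ P[D|m] z) :
    Integrable (fun z => armScore m P D Y z * g z) P ∧
      ∫ z, armScore m P D Y z * g z ∂P
        = ∫ z, ((P[fun z => D z * Y z * g z|m] z
            - armMean m P D Y z * P[fun z => D z * g z|m] z) / P[D|m] z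
          + armMean m P D Y z * g z) ∂P := by
  have hM : ∀ᵐ z ∂P, |D z * g z| ≤ M := by
    filter_upwards [hD, hg] with z hD hg using abs_mul_le_of_abs_le_one hD hg
  have hCM : ∀ᵐ z ∂P, |D z * Y z * g z| ≤ CY * M := by
    filter_upwards [hD, hY, hg] with z hD hY hg using abs_mul_mul_le_of_abs_le_one hD hY hg
  have hf₁ : Integrable (fun z => D z * Y z * g z) P :=
    .of_bound (by fun_prop : Measurable _).aestronglyMeasurable _ (by simpa using hCM)
  have hf₂ : Integrable (fun z => D z * g z) P :=
    .of_bound (by fun_prop : Measurable _).aestronglyMeasurable _ (by simpa using hM)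
  have hg' : Integrable g P := .of_bound hgm.aestronglyMeasurable _ (by simpa using hg)
  have hq := ae_abs_armMean_le hε hD hY hr
  have hc₁ : ∀ᵐ z ∂P, |1 / P[D|m] z| ≤ 1 / ε := by
    filter_upwards [hr] with z hr using abs_div_le_of_le hε abs_one.le hr
  have hc₂ : ∀ᵐ z ∂P, |armMean m P D Y z / P[D|m] z| ≤ CY / ε / ε := by
    filter_upwards [hq, hr] with z hq hr using abs_div_le_of_le hε hq hr
  have hm₁ : StronglyMeasurable[m] fun z => 1 / P[D|m] z :=
    (measurable_const.div stronglyMeasurable_condExp.measurable).stronglyMeasurable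
  have hm₂ : StronglyMeasurable[m] fun z => armMean m P D Y z / P[D|m] z :=
    (stronglyMeasurable_armMean.measurable.div
      stronglyMeasurable_condExp.measurable).stronglyMeasurable
  have hbdd : ∀ {c f : Ω → ℝ} {C : ℝ}, StronglyMeasurable[m] c → (∀ᵐ z ∂P, |c z| ≤ C) →
      Integrable f P → Integrable (fun z => c z * f z) P := fun hc hcC hf =>
    hf.bdd_mul (hc.mono hm).aestronglyMeasurable (by simpa using hcC)
  have I₁ := hbdd hm₁ hc₁ hf₁
  have I₂ := hbdd hm₂ hc₂ hf₂
  have I₃ := hbdd stronglyMeasurable_armMean hq hg'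
  have J₁ := hbdd hm₁ hc₁ (integrable_condExp (m := m) (f := fun z => D z * Y z * g z))
  have J₂ := hbdd hm₂ hc₂ (integrable_condExp (m := m) (f := fun z => D z * g z))
  have I₁₂ : Integrable (fun z => 1 / P[D|m] z * (D z * Y z * g z)
      - armMean m P D Y z / P[D|m] z * (D z * g z)) P := I₁.sub I₂
  have J₁₂ : Integrable (fun z => 1 / P[D|m] z * P[fun z => D z * Y z * g z|m] z
      - armMean m P D Y z / P[D|m] z * P[fun z => D z * g z|m] z) P := J₁.sub J₂
  have hsplit : ∀ z, armScore m P D Y z * g z = 1 / P[D|m] z * (D z * Y z * g z)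
      - armMean m P D Y z / P[D|m] z * (D z * g z) + armMean m P D Y z * g z := fun z => by
    simp only [armScore]; ring
  refine ⟨funext hsplit ▸ I₁₂.add I₃, ?_⟩
  calc ∫ z, armScore m P D Y z * g z ∂P
      = ∫ z, 1 / P[D|m] z * (D z * Y z * g z) ∂P
        - ∫ z, armMean m P D Y z / P[D|m] z * (D z * g z) ∂P
        + ∫ z, armMean m P D Y z * g z ∂P := by
        simp only [hsplit]
        rw [integral_add I₁₂ I₃, integral_sub I₁ I₂]
    _ = ∫ z, 1 / P[D|m] z * P[fun z => D z * Y z * g z|m] z ∂P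
        - ∫ z, armMean m P D Y z / P[D|m] z * P[fun z => D z * g z|m] z ∂P
        + ∫ z, armMean m P D Y z * g z ∂P := by
        rw [integral_mul_condExp_of_bound hm hm₁ hc₁ hf₁,
          integral_mul_condExp_of_bound hm hm₂ hc₂ hf₂]
    _ = _ := by
        rw [← integral_sub J₁ J₂, ← integral_add J₁₂ I₃]
        congr 1 with z
        ring

theorem hasDerivAt_integral_tiltedArmMean_mul [IsFiniteMeasure P] (hm : m ≤ m₀)
    (hDm : Measurable D) (hYm : Measurable Y) (hgm : Measurable g) (hε : 0 < ε)
    (hD : ∀ᵐ z ∂P, |D z| ≤ 1) (hY : ∀ᵐ z ∂P, |Y z| ≤ CY) (hg : ∀ᵐ z ∂P, |g z| ≤ M)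
    (hr : ∀ᵐ z ∂P, ε ≤ P[D|m] z) :
    HasDerivAt (fun t => ∫ z, tiltedArmMean m P D Y g t z * (1 + t * g z) ∂P)
      (∫ z, armScore m P D Y z * g z ∂P) 0 := by
  set C := max (max CY M) (CY * M)
  have hcondExp : ∀ {f : Ω → ℝ} {R : ℝ}, (∀ᵐ z ∂P, |f z| ≤ R) → R ≤ C →
      Measurable (P[f|m]) ∧ ∀ᵐ z ∂P, |P[f|m] z| ≤ C := fun hf hR =>
    ⟨(stronglyMeasurable_condExp.mono hm).measurable,
      (ae_bdd_abs_condExp_of_ae_bdd_abs hf).mono fun _ h => h.trans hR⟩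
  have hh := hcondExp (f := fun z => D z * Y z)
    (by filter_upwards [hD, hY] with z hD hY using abs_mul_le_of_abs_le_one hD hY)
    ((le_max_left _ _).trans (le_max_left _ _))
  have hk := hcondExp (f := fun z => D z * Y z * g z)
    (by filter_upwards [hD, hY, hg] with z hD hY hg using abs_mul_mul_le_of_abs_le_one hD hY hg)
    (le_max_right _ _)
  have hs := hcondExp (f := fun z => D z * g z)
    (by filter_upwards [hD, hg] with z hD hg using abs_mul_le_of_abs_le_one hD hg)
    ((le_max_right _ _).trans (le_max_left _ _))
  rw [(integral_armScore_mul hm hDm hYm hgm hε hD hY hg hr).2]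
  exact hasDerivAt_integral_affine_div_mul hh.1 hk.1 (stronglyMeasurable_condExp.mono hm).measurable
    hs.1 hgm hε hh.2 hk.2 hs.2
    (hg.mono fun _ h => h.trans ((le_max_right _ _).trans (le_max_left _ _))) hr

end Arm

abbrev covariateSigma (X : Type*) [MeasurableSpace X] : MeasurableSpace (Obs X) :=
  MeasurableSpace.comap (fun z : Obs X => z.2.1) inferInstance

def armInd (a : Bool) (z : Obs X) : ℝ :=
  if z.2.2 = a then 1 else 0

section Obs

variable {P : Measure (Obs X)}

theorem covariateSigma_le : covariateSigma X ≤ (inferInstance : MeasurableSpace (Obs X)) :=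
  (measurable_fst.comp measurable_snd).comap_le

theorem measurable_covariate_comp {f : X → ℝ} (hf : Measurable f) :
    Measurable[covariateSigma X] fun z : Obs X => f z.2.1 :=
  hf.comp (comap_measurable _)

@[fun_prop]
theorem measurable_armInd (a : Bool) : Measurable (armInd (X := X) a) :=
  Measurable.ite ((measurable_snd.comp measurable_snd) (measurableSet_singleton a))
    measurable_const measurable_const

theorem abs_armInd_le_one {X : Type*} (a : Bool) (z : Obs X) : |armInd a z| ≤ 1 := by
  unfold armInd; split_ifs <;> simp

theorem setIntegral_preimage_armInd_mul (a : Bool) {B : Set X} (f : Obs X → ℝ) :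
    ∫ z in (fun z : Obs X => z.2.1) ⁻¹' B, armInd a z * f z ∂P
      = ∫ z in {z : Obs X | z.2.1 ∈ B ∧ z.2.2 = a}, f z ∂P := by
  have hind : (fun z => armInd a z * f z) = {z : Obs X | z.2.2 = a}.indicator f := by
    ext z; by_cases h : z.2.2 = a <;> simp [armInd, h]
  have hA : MeasurableSet {z : Obs X | z.2.2 = a} :=
    (measurable_snd.comp measurable_snd) (measurableSet_singleton a)
  rw [hind, setIntegral_indicator hA]
  rfl

theorem IsCondMean.mul_condExp_ae_eq [IsFiniteMeasure P] {w : Obs X → ℝ} (hw : Measurable w)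
    (hw₀ : ∀ᵐ z ∂P, 0 ≤ w z) {a : Bool} {μa : X → ℝ}
    (h : IsCondMean (P.withDensity fun z => ENNReal.ofReal (w z)) a μa)
    (hYw : Integrable (fun z => armInd a z * z.1 * w z) P)
    (hDw : Integrable (fun z => armInd a z * w z) P) :
    (fun z => μa z.2.1 * P[fun z => armInd a z * w z|covariateSigma X] z)
      =ᵐ[P] P[fun z => armInd a z * z.1 * w z|covariateSigma X] := by
  obtain ⟨hμm, hμi, hμeq⟩ := h
  have hμw : Integrable (fun z => μa z.2.1 * (armInd a z * w z)) P :=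
    (((integrable_withDensity_ofReal_iff hw hw₀).1 hμi).bdd_mul
      (measurable_armInd a).aestronglyMeasurable
      (.of_forall fun z => (Real.norm_eq_abs _).trans_le (abs_armInd_le_one a z))).congr
      (.of_forall fun z => by ring)
  have hset : ∀ s, MeasurableSet[covariateSigma X] s →
      ∫ z in s, armInd a z * z.1 * w z ∂P = ∫ z in s, μa z.2.1 * (armInd a z * w z) ∂P := by
    rintro _ ⟨B, hB, rfl⟩
    have hS : MeasurableSet {z : Obs X | z.2.1 ∈ B ∧ z.2.2 = a} :=
      ((measurable_fst.comp measurable_snd) hB).inter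
        ((measurable_snd.comp measurable_snd) (measurableSet_singleton a))
    calc ∫ z in _, armInd a z * z.1 * w z ∂P = ∫ z in _, armInd a z * (w z * z.1) ∂P := by
          congr 1 with z; ring
      _ = ∫ z in {z : Obs X | z.2.1 ∈ B ∧ z.2.2 = a}, w z * z.1 ∂P :=
          setIntegral_preimage_armInd_mul a _
      _ = ∫ z in {z : Obs X | z.2.1 ∈ B ∧ z.2.2 = a}, μa z.2.1 ∂P.withDensity
            fun z => ENNReal.ofReal (w z) := by
          rw [← setIntegral_withDensity_ofReal hw hw₀ hS, hμeq B hB]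
      _ = ∫ z in _, armInd a z * (w z * μa z.2.1) ∂P := by
          rw [setIntegral_withDensity_ofReal hw hw₀ hS, setIntegral_preimage_armInd_mul]
      _ = _ := by congr 1 with z; ring
  exact ((condExp_ae_eq_of_forall_setIntegral_eq covariateSigma_le hYw hμw hset).trans
    (condExp_mul_of_stronglyMeasurable_left (f := fun z => μa z.2.1)
      (measurable_covariate_comp hμm).stronglyMeasurable hμw hDw)).symm

theorem IsCondMean.ae_eq_armMean [IsFiniteMeasure P] {CY : ℝ} (hY : ∀ᵐ z ∂P, |z.1| ≤ CY)
    {a : Bool} {μa : X → ℝ} (h : IsCondMean P a μa)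
    (hr : ∀ᵐ z ∂P, P[armInd a|covariateSigma X] z ≠ 0) :
    (fun z => μa z.2.1) =ᵐ[P] armMean (covariateSigma X) P (armInd a) Prod.fst := by
  have hDY : Integrable (fun z => armInd a z * z.1) P :=
    integrable_of_ae_abs_le CY (by fun_prop) <| by
      filter_upwards [hY] with z hz using
        abs_mul_le_of_abs_le_one (abs_armInd_le_one a z) hz
  have hD : Integrable (armInd a) P :=
    integrable_of_ae_abs_le 1 (by fun_prop) (.of_forall fun z => abs_armInd_le_one a z)
  have h1 := IsCondMean.mul_condExp_ae_eq (w := fun _ => 1) measurable_const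
    (.of_forall fun _ => zero_le_one) (by simpa using h) (by simpa using hDY) (by simpa using hD)
  simp only [mul_one] at h1
  filter_upwards [h1, hr] with z h1 hr
  exact eq_div_of_mul_eq hr h1

theorem IsCondMean.integral_withDensity_eq [IsFiniteMeasure P] {g : Obs X → ℝ}
    (hg : Measurable g) {CY M ε t : ℝ} (hY : ∀ᵐ z ∂P, |z.1| ≤ CY) (hgM : ∀ᵐ z ∂P, |g z| ≤ M)
    {a : Bool} (hr : ∀ᵐ z ∂P, ε ≤ P[armInd a|covariateSigma X] z) (ht₁ : |t| * M < 1)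
    (htε : |t| * M < ε) {μa : X → ℝ}
    (h : IsCondMean (P.withDensity fun z => ENNReal.ofReal (1 + t * g z)) a μa) :
    ∫ z, μa z.2.1 ∂P.withDensity (fun z => ENNReal.ofReal (1 + t * g z))
      = ∫ z, tiltedArmMean (covariateSigma X) P (armInd a) Prod.fst g t z * (1 + t * g z) ∂P := by
  have hD : Integrable (armInd a) P :=
    integrable_of_ae_abs_le 1 (by fun_prop) (.of_forall fun z => abs_armInd_le_one a z)
  have hDgM : ∀ᵐ z ∂P, |armInd a z * g z| ≤ M := by
    filter_upwards [hgM] with z hz using abs_mul_le_of_abs_le_one (abs_armInd_le_one a z) hz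
  have hDg : Integrable (fun z => armInd a z * g z) P :=
    integrable_of_ae_abs_le M (by fun_prop) hDgM
  have hDY : Integrable (fun z => armInd a z * z.1) P :=
    integrable_of_ae_abs_le CY (by fun_prop) <| by
      filter_upwards [hY] with z hz using abs_mul_le_of_abs_le_one (abs_armInd_le_one a z) hz
  have hDYg : Integrable (fun z => armInd a z * z.1 * g z) P :=
    integrable_of_ae_abs_le (CY * M) (by fun_prop) <| by
      filter_upwards [hY, hgM] with z hz hgz using
        abs_mul_mul_le_of_abs_le_one (abs_armInd_le_one a z) hz hgz
  have hw₀ : ∀ᵐ z ∂P, 0 ≤ 1 + t * g z := by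
    filter_upwards [hgM] with z hz using (pos_add_mul_of_abs_le hz ht₁).le
  have hden : ∀ᵐ z ∂P, P[armInd a|covariateSigma X] z
      + t * P[fun z => armInd a z * g z|covariateSigma X] z ≠ 0 := by
    filter_upwards [hr, ae_bdd_abs_condExp_of_ae_bdd_abs (m := covariateSigma X) hDgM]
      with z hr hs
    linarith [pos_add_mul_of_abs_le hs htε]
  have hμ := h.mul_condExp_ae_eq (by fun_prop) hw₀
    ((hDY.add (hDYg.const_mul t)).congr (.of_forall fun z => by simp only [Pi.add_apply]; ring))
    ((hD.add (hDg.const_mul t)).congr (.of_forall fun z => by simp only [Pi.add_apply]; ring))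
  rw [integral_withDensity_ofReal (by fun_prop) hw₀]
  refine integral_congr_ae ?_
  filter_upwards [hμ, condExp_mul_one_add_mul (m := covariateSigma X) t hDY hDYg,
    condExp_mul_one_add_mul (m := covariateSigma X) t hD hDg, hden] with z hμ hnum hden' hden
  rw [hden', hnum] at hμ
  rw [tiltedArmMean, ← eq_div_of_mul_eq hden hμ, mul_comm]

theorem IsPropensity.condExp_armInd_true_ae_eq [IsFiniteMeasure P] {pi : X → ℝ}
    (h : IsPropensity P pi) (hpi : Integrable (fun z => pi z.2.1) P) :
    P[armInd true|covariateSigma X] =ᵐ[P] fun z => pi z.2.1 := by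
  refine (ae_eq_condExp_of_forall_setIntegral_eq covariateSigma_le
    (integrable_of_ae_abs_le 1 (by fun_prop) (.of_forall (abs_armInd_le_one true)))
    (fun _ _ _ => hpi.integrableOn) ?_
    (measurable_covariate_comp h.1).stronglyMeasurable.aestronglyMeasurable).symm
  rintro _ ⟨B, hB, rfl⟩ -
  have h1 := setIntegral_preimage_armInd_mul (P := P) true (B := B) fun _ => 1
  simp only [mul_one, setIntegral_const, smul_eq_mul] at h1
  rw [h1, measureReal_def, h.2 B hB]
  rfl

theorem IsPropensity.condExp_armInd_false_ae_eq [IsFiniteMeasure P] {pi : X → ℝ}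
    (h : IsPropensity P pi) (hpi : Integrable (fun z => pi z.2.1) P) :
    P[armInd false|covariateSigma X] =ᵐ[P] fun z => 1 - pi z.2.1 := by
  have hcompl : armInd false = (fun _ : Obs X => (1 : ℝ)) - armInd true := by
    ext ⟨y, x, _ | _⟩ <;> simp [armInd]
  rw [hcompl]
  filter_upwards [condExp_sub (m := covariateSigma X) (integrable_const (1 : ℝ))
    (integrable_of_ae_abs_le 1 (by fun_prop) (.of_forall (abs_armInd_le_one true))),
    h.condExp_armInd_true_ae_eq hpi] with z hsub h1
  rw [hsub, Pi.sub_apply, condExp_const covariateSigma_le, h1]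

theorem IsPropensity.integrable {pi : X → ℝ} [IsFiniteMeasure P] (h : IsPropensity P pi)
    {ε : ℝ} (hpi : ∀ᵐ z ∂P, pi z.2.1 ∈ Icc ε (1 - ε)) : Integrable (fun z => pi z.2.1) P :=
  integrable_of_ae_abs_le (max |ε| |1 - ε|) (h.1.comp (measurable_fst.comp measurable_snd)) <| by
    filter_upwards [hpi] with z hz using abs_le_max_abs_abs hz.1 hz.2

theorem IsPropensity.ae_le_condExp_armInd {pi : X → ℝ} [IsFiniteMeasure P]
    (h : IsPropensity P pi) {ε : ℝ} (hpi : ∀ᵐ z ∂P, pi z.2.1 ∈ Icc ε (1 - ε)) (a : Bool) :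
    ∀ᵐ z ∂P, ε ≤ P[armInd a|covariateSigma X] z := by
  cases a
  · filter_upwards [h.condExp_armInd_false_ae_eq (h.integrable hpi), hpi] with z hr hz
    linarith [hz.2]
  · filter_upwards [h.condExp_armInd_true_ae_eq (h.integrable hpi), hpi] with z hr hz
    exact hr ▸ hz.1

theorem aipw_ae_eq_armScore_sub {μ₁ μ₀ pi : X → ℝ} (b : ℝ)
    (hμ₁ : (fun z => μ₁ z.2.1) =ᵐ[P] armMean (covariateSigma X) P (armInd true) Prod.fst)
    (hμ₀ : (fun z => μ₀ z.2.1) =ᵐ[P] armMean (covariateSigma X) P (armInd false) Prod.fst)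
    (hr₁ : P[armInd true|covariateSigma X] =ᵐ[P] fun z => pi z.2.1)
    (hr₀ : P[armInd false|covariateSigma X] =ᵐ[P] fun z => 1 - pi z.2.1) :
    aipw μ₁ μ₀ pi b =ᵐ[P] fun z => armScore (covariateSigma X) P (armInd true) Prod.fst z
      - armScore (covariateSigma X) P (armInd false) Prod.fst z - b := by
  filter_upwards [hμ₁, hμ₀, hr₁, hr₀] with z hμ₁ hμ₀ hr₁ hr₀
  simp only [armScore, aipw, ← hμ₁, ← hμ₀, hr₁, hr₀]
  obtain ⟨y, x, _ | _⟩ := z <;> simp [armInd] <;> ring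

theorem integral_aipw_mul [IsFiniteMeasure P] {CY ε : ℝ} (hε : 0 < ε)
    (hY : ∀ᵐ z ∂P, |z.1| ≤ CY) {μ : Bool → X → ℝ} (hμ : ∀ a, IsCondMean P a (μ a))
    {pi : X → ℝ} (hpi : IsPropensity P pi) (hpi_range : ∀ᵐ z ∂P, pi z.2.1 ∈ Icc ε (1 - ε))
    {g : Obs X → ℝ} (hg : Measurable g) {M : ℝ} (hgM : ∀ᵐ z ∂P, |g z| ≤ M)
    (hg_mean : ∫ z, g z ∂P = 0) (b : ℝ) :
    ∫ z, aipw (μ true) (μ false) pi b z * g z ∂P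
      = ∫ z, armScore (covariateSigma X) P (armInd true) Prod.fst z * g z ∂P
        - ∫ z, armScore (covariateSigma X) P (armInd false) Prod.fst z * g z ∂P := by
  have hr := hpi.ae_le_condExp_armInd hpi_range
  have hμ' a := (hμ a).ae_eq_armMean hY ((hr a).mono fun z hz => (hε.trans_le hz).ne')
  have hψ a := (integral_armScore_mul covariateSigma_le (measurable_armInd a) measurable_fst hg hε
    (.of_forall (abs_armInd_le_one a)) hY hgM (hr a)).1
  have hψg : Integrable (fun z => armScore (covariateSigma X) P (armInd true) Prod.fst z * g z
      - armScore (covariateSigma X) P (armInd false) Prod.fst z * g z) P :=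
    (hψ true).sub (hψ false)
  have hbg := (integrable_of_ae_abs_le M hg hgM).const_mul b
  -- subtract `∫ b * g = 0` to absorb the constant `b` of `aipw`
  rw [← integral_sub (hψ true) (hψ false), ← sub_zero (∫ z, _ - _ ∂P), ← mul_zero b,
    ← hg_mean, ← integral_const_mul, ← integral_sub hψg hbg]
  refine integral_congr_ae ?_
  filter_upwards [aipw_ae_eq_armScore_sub b (hμ' true) (hμ' false)
    (hpi.condExp_armInd_true_ae_eq (hpi.integrable hpi_range))
    (hpi.condExp_armInd_false_ae_eq (hpi.integrable hpi_range))] with z hz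
  rw [hz]
  ring

end Obs

theorem ate_pathwise_derivative_along_linear_tilts_general
    (ν : Measure (Obs X))
    (P0 : Measure (Obs X)) [IsProbabilityMeasure P0]
    (p0 : Obs X → ℝ) (hp0_meas : Measurable p0) (hp0_nonneg : ∀ᵐ z ∂ν, 0 ≤ p0 z)
    (hp0 : IsDensityOf ν P0 p0)
    (CY eps : ℝ) (heps : 0 < eps)
    (hY : ∀ᵐ z ∂P0, |z.1| ≤ CY)
    (μ : Bool → X → ℝ) (hμ : ∀ a, IsCondMean P0 a (μ a))
    (pi : X → ℝ) (hpi : IsPropensity P0 pi)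
    (hpi_range : ∀ᵐ z ∂P0, pi z.2.1 ∈ Set.Icc eps (1 - eps))
    -- β₀ and the influence function φ of the ATE
    (β0 : ℝ)
    (φ : Obs X → ℝ) (hφ : φ = aipw (μ true) (μ false) pi β0)
    -- the bounded mean-zero perturbation g and the linear tilt family
    (g : Obs X → ℝ) (hg_meas : Measurable g)
    (M : ℝ) (hg_bdd : ∀ᵐ z ∂P0, |g z| ≤ M)
    (hg_mean : ∫ z, g z ∂P0 = 0)
    (Pt : ℝ → Measure (Obs X))
    (hPt : Pt = fun t => ν.withDensity
      (fun z => ENNReal.ofReal (p0 z * (1 + t * g z))))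
    -- versions of the conditional means under the tilted measures
    (μt : ℝ → Bool → X → ℝ) (δ : ℝ) (hδ : 0 < δ)
    (hμt : ∀ t : ℝ, |t| < δ → |t| * M < 1 → ∀ a, IsCondMean (Pt t) a (μt t a)) :
    HasDerivAt (fun t : ℝ => ∫ z, (μt t true z.2.1 - μt t false z.2.1) ∂(Pt t))
      (∫ z, φ z * g z ∂P0) 0 := by
  have hPt' : ∀ t, Pt t = P0.withDensity fun z => ENNReal.ofReal (1 + t * g z) := fun t => by
    rw [hPt, hp0, ← withDensity_ofReal_mul hp0_meas hp0_nonneg (by fun_prop)]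
  have hr := hpi.ae_le_condExp_armInd hpi_range
  have harm a := hasDerivAt_integral_tiltedArmMean_mul (P := P0) covariateSigma_le
    (measurable_armInd a) measurable_fst hg_meas heps (.of_forall (abs_armInd_le_one a)) hY
    hg_bdd (hr a)
  rw [hφ, integral_aipw_mul heps hY hμ hpi hpi_range hg_meas hg_bdd hg_mean]
  refine ((harm true).sub (harm false)).congr_of_eventuallyEq ?_
  filter_upwards [eventually_abs_sub_lt 0 hδ, eventually_abs_mul_lt M one_pos,
    eventually_abs_mul_lt M heps] with t htδ ht₁ htε
  have h := hμt t (by simpa using htδ) ht₁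
  simp only [hPt' t] at h ⊢
  rw [integral_sub (h true).2.1 (h false).2.1,
    (h true).integral_withDensity_eq hg_meas hY hg_bdd (hr true) ht₁ htε,
    (h false).integral_withDensity_eq hg_meas hY hg_bdd (hr false) ht₁ htε]
  rfl

theorem ate_pathwise_derivative_along_linear_tilts
    (ν : Measure (Obs X)) [SigmaFinite ν]
    (P0 : Measure (Obs X)) [IsProbabilityMeasure P0]
    (p0 : Obs X → ℝ) (hp0_meas : Measurable p0) (hp0_nonneg : ∀ᵐ z ∂ν, 0 ≤ p0 z)
    (hp0 : IsDensityOf ν P0 p0)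
    (CY eps : ℝ) (heps : 0 < eps)
    (hY : ∀ᵐ z ∂P0, |z.1| ≤ CY)
    (μ : Bool → X → ℝ) (hμ : ∀ a, IsCondMean P0 a (μ a))
    (pi : X → ℝ) (hpi : IsPropensity P0 pi)
    (hpi_range : ∀ᵐ z ∂P0, pi z.2.1 ∈ Set.Icc eps (1 - eps))
    -- β₀ and the influence function φ of the ATE
    (β0 : ℝ) (hβ0 : β0 = ∫ z, (μ true z.2.1 - μ false z.2.1) ∂P0)
    (φ : Obs X → ℝ) (hφ : φ = aipw (μ true) (μ false) pi β0)
    -- the bounded mean-zero perturbation g and the linear tilt family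
    (g : Obs X → ℝ) (hg_meas : Measurable g)
    (M : ℝ) (hg_bdd : ∀ᵐ z ∂P0, |g z| ≤ M)
    (hg_mean : ∫ z, g z ∂P0 = 0)
    (Pt : ℝ → Measure (Obs X))
    (hPt : Pt = fun t => ν.withDensity
      (fun z => ENNReal.ofReal (p0 z * (1 + t * g z))))
    -- versions of the conditional means under the tilted measures
    (μt : ℝ → Bool → X → ℝ) (δ : ℝ) (hδ : 0 < δ)
    (hμt : ∀ t : ℝ, |t| < δ → |t| * M < 1 → ∀ a, IsCondMean (Pt t) a (μt t a)) :
    HasDerivAt (fun t : ℝ => ∫ z, (μt t true z.2.1 - μt t false z.2.1) ∂(Pt t))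
      (∫ z, φ z * g z ∂P0) 0 :=
  ate_pathwise_derivative_along_linear_tilts_general ν P0 p0 hp0_meas hp0_nonneg hp0 CY eps heps hY
    μ hμ pi hpi hpi_range β0 φ hφ g hg_meas M hg_bdd hg_mean Pt hPt μt δ hδ hμt

end ATE
end
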